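/- For c ∈ ℂ^{ℤ_d×ℤ_d}, the matrix Tc is Hermitian if and only if the symbols of c satisfy conj(p_j(z)) = p_{−j}(ω^j z) for every j ∈ ℤ_d and every complex z with z^d = 1. -/

import Mathlib

/-!
Writing `ψ` for the standard additive character `a ↦ ω^a` of `ZMod d`, the entries of `Tc` are
`(Tc)_{ab} = p_{a-b}(ψ b) / d`. Since every `d`-th root of unity is some `ψ a` and
`ω^j ψ a = ψ (j + a)`, the symbol condition at `(j, ψ a)` is exactly the Hermitian symmetry
`conj (Tc)_{ba} = (Tc)_{ab}` at `b = j + a`.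
-/

open Matrix Complex

/-- `ω = exp(2πi/d)`, a primitive `d`-th root of unity. -/
noncomputable def omegaRoot (d : ℕ) : ℂ := Complex.exp (2 * Real.pi * Complex.I / d)

/-- The cyclic shift matrix `S`, `S_{jk} = δ_{j,k+1}`. -/
def Smat (d : ℕ) [NeZero d] : Matrix (ZMod d) (ZMod d) ℂ :=
  Matrix.of fun j k => if j = k + 1 then 1 else 0

/-- The modulation matrix `Ω`, `Ω_{jk} = ω^j δ_{jk}`. -/
noncomputable def Omat (d : ℕ) [NeZero d] : Matrix (ZMod d) (ZMod d) ℂ :=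
  Matrix.of fun j k => if j = k then omegaRoot d ^ j.val else 0

/-- The reconstruction operator `T`, `Tc = (1/d) Σ_{j,k} c_{jk} (S^j Ω^k)^*`. -/
noncomputable def Trec (d : ℕ) [NeZero d] (c : Matrix (ZMod d) (ZMod d) ℂ) :
    Matrix (ZMod d) (ZMod d) ℂ :=
  (1 / (d : ℂ)) • ∑ j : ZMod d, ∑ k : ZMod d, c j k • (Smat d ^ j.val * Omat d ^ k.val)ᴴ

/-- The `j`-th symbol of `c`: `p_j(z) = Σ_r c_{-j,r} (ω^j z)^{-r}`. -/
noncomputable def symb (d : ℕ) [NeZero d] (c : Matrix (ZMod d) (ZMod d) ℂ)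
    (j : ZMod d) (z : ℂ) : ℂ :=
  ∑ r : ZMod d, c (-j) r * (omegaRoot d ^ j.val * z) ^ (-(r.val : ℤ))

open ZMod

section

variable {d : ℕ} [NeZero d]

lemma omegaRoot_pow (n : ℕ) : omegaRoot d ^ n = stdAddChar (n : ZMod d) := by
  rw [omegaRoot, ← Complex.exp_nat_mul, stdAddChar_apply, toCircle_natCast]
  ring_nf

lemma omegaRoot_pow_val (x : ZMod d) : omegaRoot d ^ x.val = stdAddChar x := by
  rw [omegaRoot_pow, natCast_zmod_val]

lemma stdAddChar_pow_eq_one (x : ZMod d) : stdAddChar x ^ d = 1 := by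
  rw [← AddChar.map_nsmul_eq_pow, nsmul_eq_mul, natCast_self, zero_mul,
    AddChar.map_zero_eq_one]

lemma exists_stdAddChar_eq_of_pow_eq_one {z : ℂ} (hz : z ^ d = 1) :
    ∃ a : ZMod d, stdAddChar a = z := by
  obtain ⟨i, -, rfl⟩ := (Complex.isPrimitiveRoot_exp d (NeZero.ne d)).eq_pow_of_pow_eq_one hz
  exact ⟨i, (omegaRoot_pow i).symm⟩

lemma Smat_pow_apply (n : ℕ) (a b : ZMod d) :
    (Smat d ^ n) a b = if a = b + n then 1 else 0 := by
  induction n generalizing a with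
  | zero => simp [Matrix.one_apply]
  | succ n ih =>
    rw [pow_succ', Matrix.mul_apply, Finset.sum_eq_single (a - 1)]
    · rw [ih, Smat, of_apply, if_pos (sub_add_cancel a 1).symm, one_mul]
      simp only [sub_eq_iff_eq_add, Nat.cast_succ, add_assoc]
    · intro x _ hx
      rw [Smat, of_apply, if_neg fun h => hx (eq_sub_of_add_eq h.symm), zero_mul]
    · simp

lemma Omat_eq_diagonal : Omat d = diagonal (stdAddChar : ZMod d → ℂ) := by
  ext a b
  simp [Omat, diagonal, omegaRoot_pow_val]

lemma Smat_pow_mul_Omat_pow_apply (j k a b : ZMod d) :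
    (Smat d ^ j.val * Omat d ^ k.val) a b =
      if a = b + j then stdAddChar (b * k) else 0 := by
  rw [Omat_eq_diagonal, diagonal_pow, mul_diagonal, Smat_pow_apply, natCast_zmod_val,
    Pi.pow_apply, ← AddChar.map_nsmul_eq_pow, nsmul_eq_mul, natCast_zmod_val, mul_comm k]
  split_ifs <;> simp

lemma Trec_apply (c : Matrix (ZMod d) (ZMod d) ℂ) (a b : ZMod d) :
    Trec d c a b = (∑ k, c (b - a) k * stdAddChar (-(a * k))) / d := by
  simp only [Trec, Matrix.smul_apply, Matrix.sum_apply, conjTranspose_apply,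
    Smat_pow_mul_Omat_pow_apply, smul_eq_mul]
  rw [Finset.sum_eq_single (b - a)]
  · simp [AddChar.map_neg_eq_conj, div_eq_inv_mul]
  · intro j _ hj
    have : b ≠ a + j := fun h => hj (by rw [h, add_sub_cancel_left])
    simp [this]
  · simp

lemma symb_stdAddChar (c : Matrix (ZMod d) (ZMod d) ℂ) (j a : ZMod d) :
    symb d c j (stdAddChar a) = ∑ r, c (-j) r * stdAddChar (-((j + a) * r)) := by
  simp only [symb, omegaRoot_pow_val, ← AddChar.map_add_eq_mul, ← AddChar.map_zsmul_eq_zpow,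
    zsmul_eq_mul, Int.cast_neg, Int.cast_natCast, natCast_zmod_val]
  refine Finset.sum_congr rfl fun r _ => ?_
  ring_nf

lemma Trec_apply_eq_symb (c : Matrix (ZMod d) (ZMod d) ℂ) (a b : ZMod d) :
    Trec d c a b = symb d c (a - b) (stdAddChar b) / d := by
  rw [Trec_apply, symb_stdAddChar, neg_sub, sub_add_cancel]

end

theorem stmt18_general (d : ℕ) [NeZero d] (c : Matrix (ZMod d) (ZMod d) ℂ) :
    (Trec d c).IsHermitian ↔
    ∀ j : ZMod d, ∀ z : ℂ, z ^ d = 1 →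
      (starRingEnd ℂ) (symb d c j z) = symb d c (-j) (omegaRoot d ^ j.val * z) := by
  have hd0 : (d : ℂ) ≠ 0 := Nat.cast_ne_zero.mpr (NeZero.ne d)
  simp only [IsHermitian.ext_iff, Trec_apply_eq_symb, star_div₀, star_natCast,
    div_left_inj' hd0, Complex.star_def]
  constructor
  · intro h j z hz
    obtain ⟨a, rfl⟩ := exists_stdAddChar_eq_of_pow_eq_one hz
    rw [omegaRoot_pow_val, ← AddChar.map_add_eq_mul]
    simpa using h a (j + a)
  · intro h a b
    simpa [omegaRoot_pow_val, ← AddChar.map_add_eq_mul] using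
      h (b - a) (stdAddChar a) (stdAddChar_pow_eq_one a)

theorem stmt18 (d : ℕ) [NeZero d] (hd : 2 ≤ d) (c : Matrix (ZMod d) (ZMod d) ℂ) :
    (Trec d c).IsHermitian ↔
    ∀ j : ZMod d, ∀ z : ℂ, z ^ d = 1 →
      (starRingEnd ℂ) (symb d c j z) = symb d c (-j) (omegaRoot d ^ j.val * z) :=
  stmt18_general d c
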